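/- If A is a solution of the reflection equation with the standard Uq(gl(n)) braid matrix (q generic) whose associated admissible pair has Y₀ ≠ ∅ (where Y₀ = {i ∈ Y : σ(σ(i)) = i}), then Y₀ = Y, Y₋ = [1, b₋], Y₊ = [b₊, b₊ + b₋ - 1], and σ(i) = b₊ + b₋ - i for all i ∈ Y; moreover the product y_i y_{σ(i)} is independent of i ∈ Y. -/

import Mathlib

open Matrix Kronecker

/-- The coefficient `s_{ik}`: `q - q⁻¹` if `i < k`, `q` if `i = k`, `0` if `i > k`. -/
noncomputable def sCoeff {n : ℕ} (q : ℂ) (i k : Fin n) : ℂ :=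
  if (i : ℕ) < (k : ℕ) then q - q⁻¹ else if i = k then q else 0

/-- The standard `U_q(gl(n))` braid matrix
`S = Σ_{i,k} s_{ik} e^i_i ⊗ e^k_k + Σ_{i≠j} e^i_j ⊗ e^j_i` on `ℂ^n ⊗ ℂ^n`. -/
noncomputable def braidS (n : ℕ) (q : ℂ) :
    Matrix (Fin n × Fin n) (Fin n × Fin n) ℂ :=
  fun p r =>
    (if p.1 = r.1 ∧ p.2 = r.2 then sCoeff q p.1 p.2 else 0) +
    (if p.1 ≠ p.2 ∧ r.1 = p.2 ∧ r.2 = p.1 then 1 else 0)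

/-- `A₂ = 1 ⊗ A` on `ℂ^n ⊗ ℂ^n`. -/
noncomputable def A2 {n : ℕ} (A : Matrix (Fin n) (Fin n) ℂ) :
    Matrix (Fin n × Fin n) (Fin n × Fin n) ℂ :=
  (1 : Matrix (Fin n) (Fin n) ℂ) ⊗ₖ A

/-- The reflection equation `S A₂ S A₂ = A₂ S A₂ S`. -/
noncomputable def RE (n : ℕ) (q : ℂ) (A : Matrix (Fin n) (Fin n) ℂ) : Prop :=
  braidS n q * A2 A * braidS n q * A2 A = A2 A * braidS n q * A2 A * braidS n q

section part1
variable {n : ℕ} (q : ℂ) (A : Matrix (Fin n) (Fin n) ℂ)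

lemma braidS_apply' (p r : Fin n × Fin n) :
    braidS n q p r = (if r = p then sCoeff q p.1 p.2 else 0) +
      (if p.1 = p.2 then 0 else if r = (p.2, p.1) then 1 else 0) := by
  obtain ⟨p1, p2⟩ := p
  obtain ⟨r1, r2⟩ := r
  simp only [braidS, Prod.mk.injEq, Prod.ext_iff]
  congr 1
  · by_cases h1 : p1 = r1 <;> by_cases h2 : p2 = r2 <;>
      simp [h1, h2, eq_comm]
  · by_cases h : p1 = p2 <;> by_cases h1 : r1 = p2 <;> by_cases h2 : r2 = p1 <;>
      simp_all [eq_comm]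

lemma braidS_mul_apply (M : Matrix (Fin n × Fin n) (Fin n × Fin n) ℂ)
    (p r : Fin n × Fin n) :
    (braidS n q * M) p r =
      sCoeff q p.1 p.2 * M p r + (if p.1 = p.2 then 0 else M (p.2, p.1) r) := by
  rw [Matrix.mul_apply]
  have : ∀ k, braidS n q p k * M k r =
      (if k = p then sCoeff q p.1 p.2 * M p r else 0) +
      (if p.1 = p.2 then 0 else if k = (p.2, p.1) then M (p.2, p.1) r else 0) := by
    intro k
    rw [braidS_apply']
    obtain ⟨k1, k2⟩ := k
    obtain ⟨p1, p2⟩ := p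
    simp only [Prod.mk.injEq, Prod.ext_iff] at *
    by_cases h1 : k1 = p1 <;> by_cases h2 : k2 = p2 <;> by_cases h3 : p1 = p2 <;>
      by_cases h4 : k1 = p2 <;> by_cases h5 : k2 = p1 <;>
      (try simp_all) <;> (try (intros; subst_vars; simp_all)) <;> (try ring)
  simp only [this, Finset.sum_add_distrib, Finset.sum_ite_eq', Finset.mem_univ, if_true]
  by_cases h : p.1 = p.2 <;> simp [h]

lemma mul_braidS_apply (M : Matrix (Fin n × Fin n) (Fin n × Fin n) ℂ)
    (p r : Fin n × Fin n) :
    (M * braidS n q) p r =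
      M p r * sCoeff q r.1 r.2 + (if r.1 = r.2 then 0 else M p (r.2, r.1)) := by
  rw [Matrix.mul_apply]
  have : ∀ k, M p k * braidS n q k r =
      (if k = r then M p r * sCoeff q r.1 r.2 else 0) +
      (if r.1 = r.2 then 0 else if k = (r.2, r.1) then M p (r.2, r.1) else 0) := by
    intro k
    obtain ⟨k1, k2⟩ := k
    obtain ⟨r1, r2⟩ := r
    simp only [braidS, Prod.mk.injEq, Prod.ext_iff]
    by_cases h1 : k1 = r1 <;> by_cases h2 : k2 = r2 <;> by_cases h3 : r1 = r2 <;>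
      by_cases h4 : k1 = r2 <;> by_cases h5 : k2 = r1 <;>
      (try simp_all) <;> (try (intros; subst_vars; simp_all)) <;> (try ring)
  simp only [this, Finset.sum_add_distrib, Finset.sum_ite_eq', Finset.mem_univ, if_true]
  by_cases h : r.1 = r.2 <;> simp [h]

lemma mul_A2_apply (M : Matrix (Fin n × Fin n) (Fin n × Fin n) ℂ)
    (p r : Fin n × Fin n) :
    (M * A2 A) p r = ∑ u, M p (r.1, u) * A u r.2 := by
  rw [Matrix.mul_apply]
  rw [Fintype.sum_prod_type]
  have : ∀ k1, ∑ k2, M p (k1, k2) * A2 A (k1, k2) r =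
      if k1 = r.1 then ∑ u, M p (r.1, u) * A u r.2 else 0 := by
    intro k1
    by_cases h : k1 = r.1
    · subst h
      simp [A2, Matrix.kroneckerMap_apply, Matrix.one_apply]
    · simp [A2, Matrix.kroneckerMap_apply, Matrix.one_apply, h]
  simp [this]

end part1

section part2
variable {n : ℕ} (q : ℂ) (A : Matrix (Fin n) (Fin n) ℂ)

noncomputable def Gq (c b d : Fin n) : ℂ := ∑ u, sCoeff q c u * (A b u * A u d)

lemma A2_apply (p r : Fin n × Fin n) :
    A2 A p r = if p.1 = r.1 then A p.2 r.2 else 0 := by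
  simp [A2, Matrix.kroneckerMap_apply, Matrix.one_apply, ite_mul]

lemma sum_if_const (P : Prop) [Decidable P] (f : Fin n → ℂ) :
    (∑ u, if P then f u else 0) = if P then ∑ u, f u else 0 := by
  split_ifs <;> simp

lemma sum_if_const' (P : Prop) [Decidable P] (f : Fin n → ℂ) :
    (∑ u, if P then 0 else f u) = if P then 0 else ∑ u, f u := by
  split_ifs <;> simp

lemma sum2 (c a : Fin n) (g : Fin n → ℂ) :
    (∑ u, if c = u then 0 else if a = u then g u else 0) = if a = c then 0 else g a := by
  have h : ∀ u, (if c = u then (0:ℂ) else if a = u then g u else 0) =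
      if a = u then (if a = c then 0 else g u) else 0 := by
    intro u
    rcases eq_or_ne c u with h1 | h1 <;> rcases eq_or_ne a u with h2 | h2 <;>
      subst_vars <;> simp_all [eq_comm]
  rw [Finset.sum_congr rfl fun u _ => h u]
  rcases eq_or_ne a c with h2 | h2 <;> simp [Finset.sum_ite_eq, h2]

lemma Lval (a b c d : Fin n) :
    (braidS n q * A2 A * braidS n q * A2 A) (a, b) (c, d) =
    (if a = c then sCoeff q a b * Gq q A c b d else 0) +
    ((if a = b then 0 else if b = c then Gq q A c a d else 0) +
    ((if a = c then 0 else sCoeff q a b * (A b c * A a d)) +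
    (if a = b then 0 else if b = c then 0 else A a c * A b d))) := by
  rw [mul_A2_apply]
  have step : ∀ u : Fin n,
      (braidS n q * A2 A * braidS n q) (a, b) (((c, d) : Fin n × Fin n).1, u) *
        A u ((c, d) : Fin n × Fin n).2 =
      (if a = c then sCoeff q a b * (sCoeff q c u * (A b u * A u d)) else 0) +
      ((if a = b then 0 else if b = c then sCoeff q c u * (A a u * A u d) else 0) +
      ((if c = u then 0 else if a = u then sCoeff q a b * (A b c * A u d) else 0) +
      (if a = b then 0 else if c = u then 0 else if b = u then A a c * A u d else 0))) := by
    intro u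
    rw [mul_braidS_apply, braidS_mul_apply, braidS_mul_apply, A2_apply, A2_apply,
      A2_apply, A2_apply]
    dsimp only
    split_ifs <;> ring
  rw [Finset.sum_congr rfl fun u _ => step u]
  rw [Finset.sum_add_distrib, Finset.sum_add_distrib, Finset.sum_add_distrib]
  congr 1
  · rw [sum_if_const]
    rcases eq_or_ne a c with h | h <;> simp [h, Gq, Finset.mul_sum]
  congr 1
  · rw [sum_if_const']
    rcases eq_or_ne a b with h | h <;> simp [h, sum_if_const, Gq]
  congr 1
  · exact sum2 c a _
  · rw [sum_if_const']
    rcases eq_or_ne a b with h | h <;> simp [h, sum2 c b _]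

lemma Rval (a b c d : Fin n) :
    (A2 A * braidS n q * A2 A * braidS n q) (a, b) (c, d) =
    (if a = c then sCoeff q c d * Gq q A c b d else 0) +
    ((if a = c then 0 else sCoeff q c d * (A b c * A a d)) +
    ((if c = d then 0 else if a = d then Gq q A d b c else 0) +
    (if c = d then 0 else if a = d then 0 else A b d * A a c))) := by
  have F2 : ∀ r1 r2 : Fin n, (A2 A * braidS n q * A2 A) (a, b) (r1, r2) =
      (if a = r1 then Gq q A r1 b r2 else 0) +
      (if a = r1 then 0 else A b r1 * A a r2) := by
    intro r1 r2
    rw [mul_A2_apply]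
    have step : ∀ u : Fin n,
        (A2 A * braidS n q) (a, b) (((r1, r2) : Fin n × Fin n).1, u) *
          A u ((r1, r2) : Fin n × Fin n).2 =
        (if a = r1 then sCoeff q r1 u * (A b u * A u r2) else 0) +
        (if r1 = u then 0 else if a = u then A b r1 * A u r2 else 0) := by
      intro u
      rw [mul_braidS_apply, A2_apply, A2_apply]
      dsimp only
      split_ifs <;> ring
    rw [Finset.sum_congr rfl fun u _ => step u]
    rw [Finset.sum_add_distrib, sum_if_const, sum2 r1 a _, ← Gq]
  rw [mul_braidS_apply, F2, F2]
  dsimp only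
  split_ifs <;> ring

lemma entry_eq (hRE : RE n q A) (a b c d : Fin n) :
    (if a = c then sCoeff q a b * Gq q A c b d else 0) +
    ((if a = b then 0 else if b = c then Gq q A c a d else 0) +
    ((if a = c then 0 else sCoeff q a b * (A b c * A a d)) +
    (if a = b then 0 else if b = c then 0 else A a c * A b d))) =
    (if a = c then sCoeff q c d * Gq q A c b d else 0) +
    ((if a = c then 0 else sCoeff q c d * (A b c * A a d)) +
    ((if c = d then 0 else if a = d then Gq q A d b c else 0) +
    (if c = d then 0 else if a = d then 0 else A b d * A a c))) := by
  rw [← Lval, ← Rval]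
  rw [RE] at hRE
  rw [hRE]
end part2

section part3
variable {n : ℕ} (q : ℂ) (A : Matrix (Fin n) (Fin n) ℂ)
variable (Y : Finset (Fin n)) (σ : Fin n → Fin n) (x y : Fin n → ℂ)
variable (hfix : ∀ i ∈ Y, σ i ≠ i)
variable (hA : A = fun j i : Fin n =>
      (if j = i then x i else 0) + (if i ∈ Y ∧ j = σ i then y i else 0))

include hA hfix

lemma Adiag (u : Fin n) : A u u = x u := by
  subst hA
  by_cases hu : u ∈ Y
  · simp [Ne.symm (hfix u hu), hu]
  · simp [hu]

lemma Asig (i : Fin n) (hi : i ∈ Y) : A (σ i) i = y i := by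
  subst hA
  simp [hi, hfix i hi]

lemma Aoff (u v : Fin n) (h1 : u ≠ v) (h2 : ¬ (v ∈ Y ∧ u = σ v)) : A u v = 0 := by
  subst hA
  simp [h1, h2]

lemma Gval (c b d : Fin n) :
    Gq q A c b d =
      (if b = d then sCoeff q c b * (x b * x d) else 0) +
      (sCoeff q c b * x b * (if d ∈ Y ∧ b = σ d then y d else 0) +
      (sCoeff q c d * (if d ∈ Y ∧ b = σ d then y d else 0) * x d +
      (if d ∈ Y then sCoeff q c (σ d) *
          (if σ d ∈ Y ∧ b = σ (σ d) then y (σ d) else 0) * y d else 0))) := by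
  have hAe : ∀ u v : Fin n, A u v =
      (if u = v then x v else 0) + (if v ∈ Y ∧ u = σ v then y v else 0) := by
    rw [hA]; intro u v; rfl
  rw [Gq]
  have step : ∀ u : Fin n, sCoeff q c u * (A b u * A u d) =
      (sCoeff q c u * ((if b = u then x u else 0) * (if u = d then x d else 0)) +
      (sCoeff q c u * ((if b = u then x u else 0) * (if d ∈ Y ∧ u = σ d then y d else 0)) +
      (sCoeff q c u * ((if u ∈ Y ∧ b = σ u then y u else 0) * (if u = d then x d else 0)) +
      sCoeff q c u * ((if u ∈ Y ∧ b = σ u then y u else 0) *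
        (if d ∈ Y ∧ u = σ d then y d else 0))))) := by
    intro u
    rw [hAe b u, hAe u d]
    ring
  rw [Finset.sum_congr rfl fun u _ => step u]
  rw [Finset.sum_add_distrib, Finset.sum_add_distrib, Finset.sum_add_distrib]
  congr 1
  · -- T1
    rw [Finset.sum_eq_single b]
    · rcases eq_or_ne b d with h | h <;> simp [h]
    · intro u _ hu; simp [Ne.symm hu]
    · intro h; exact absurd (Finset.mem_univ b) h
  congr 1
  · -- T2
    rw [Finset.sum_eq_single b]
    · simp [mul_assoc]
    · intro u _ hu; simp [Ne.symm hu]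
    · intro h; exact absurd (Finset.mem_univ b) h
  congr 1
  · -- T3
    rw [Finset.sum_eq_single d]
    · simp [mul_assoc]
    · intro u _ hu; simp [hu]
    · intro h; exact absurd (Finset.mem_univ d) h
  · -- T4
    by_cases hd : d ∈ Y
    · rw [Finset.sum_eq_single (σ d)]
      · simp [hd, mul_assoc]
      · intro u _ hu
        have : ¬ (d ∈ Y ∧ u = σ d) := fun hc => hu hc.2
        simp [this]
      · intro h; exact absurd (Finset.mem_univ (σ d)) h
    · have : ∀ u : Fin n, ¬ (d ∈ Y ∧ u = σ d) := fun u hc => hd hc.1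
      simp [this, hd]
end part3

section part4
variable {n : ℕ} (q : ℂ) (A : Matrix (Fin n) (Fin n) ℂ)
variable (Y : Finset (Fin n)) (σ : Fin n → Fin n) (x y : Fin n → ℂ)
variable (hfix : ∀ i ∈ Y, σ i ≠ i)
variable (hy : ∀ i ∈ Y, y i ≠ 0)
variable (hA : A = fun j i : Fin n =>
      (if j = i then x i else 0) + (if i ∈ Y ∧ j = σ i then y i else 0))
variable (hRE : RE n q A)

include hfix hy hA hRE

lemma S1 (i : Fin n) (hi : i ∈ Y) :
    sCoeff q i (σ i) * x (σ i) + sCoeff q (σ i) i * x i = 0 := by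
  have hne : σ i ≠ i := hfix i hi
  have h4 : ¬ (σ i ∈ Y ∧ σ i = σ (σ i)) := by
    rintro ⟨h1, h2⟩; exact hfix (σ i) h1 h2.symm
  have E := entry_eq q A hRE (σ i) i i i
  rw [Gval q A Y σ x y hfix hA i (σ i) i] at E
  simp only [if_neg hne, if_pos rfl, hi, true_and, and_true, if_neg h4, if_true,
    Adiag A Y σ x y hfix hA, Asig A Y σ x y hfix hA i hi, add_zero, zero_add,
    mul_zero, zero_mul, ite_true, ite_false, eq_self_iff_true] at E
  have E2 : y i * (sCoeff q i (σ i) * x (σ i) + sCoeff q (σ i) i * x i) = 0 := by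
    linear_combination E
  rcases mul_eq_zero.1 E2 with h | h
  · exact absurd h (hy i hi)
  · exact h

lemma S2 (i : Fin n) (hi : i ∈ Y) (k : Fin n) (hki : k ≠ i) (hks : k ≠ σ i) :
    (sCoeff q k (σ i) - sCoeff q i k) * x k =
      sCoeff q k (σ i) * x (σ i) + sCoeff q k i * x i := by
  have hne : σ i ≠ i := hfix i hi
  have h4 : ¬ (σ i ∈ Y ∧ σ i = σ (σ i)) := by
    rintro ⟨h1, h2⟩; exact hfix (σ i) h1 h2.symm
  have hAki : A k i = 0 := by
    apply Aoff A Y σ x y hfix hA k i hki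
    rintro ⟨_, h2⟩; exact hks h2
  have E := entry_eq q A hRE k (σ i) i k
  rw [Gval q A Y σ x y hfix hA k (σ i) i] at E
  simp only [if_neg hne, if_neg hki, if_neg hks, if_neg (Ne.symm hne),
    if_neg (Ne.symm hki), if_pos rfl, hi, true_and, and_true, if_neg h4, if_true,
    hAki, Adiag A Y σ x y hfix hA, Asig A Y σ x y hfix hA i hi, add_zero, zero_add,
    mul_zero, zero_mul, ite_true, ite_false, eq_self_iff_true] at E
  have E2 : y i * ((sCoeff q k (σ i) - sCoeff q i k) * x k -
      (sCoeff q k (σ i) * x (σ i) + sCoeff q k i * x i)) = 0 := by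
    linear_combination E
  rcases mul_eq_zero.1 E2 with h | h
  · exact absurd h (hy i hi)
  · linear_combination h

lemma E5 (a b : Fin n) (hab : a ≠ b) :
    sCoeff q b a * (x a * x a) +
      (if a ∈ Y ∧ σ a ∈ Y ∧ a = σ (σ a) then sCoeff q b (σ a) * (y (σ a) * y a) else 0) +
      sCoeff q a b * (x b * x a) =
    sCoeff q a b * (x b * x b) + sCoeff q b a * (x b * x a) +
      (if b ∈ Y ∧ σ b ∈ Y ∧ b = σ (σ b) then sCoeff q a (σ b) * (y (σ b) * y b) else 0) := by
  have hfa : ¬ (a ∈ Y ∧ a = σ a) := by rintro ⟨h1, h2⟩; exact hfix a h1 h2.symm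
  have hfb : ¬ (b ∈ Y ∧ b = σ b) := by rintro ⟨h1, h2⟩; exact hfix b h1 h2.symm
  have flat : ∀ c u : Fin n,
      (if u ∈ Y then sCoeff q c (σ u) * (if σ u ∈ Y ∧ u = σ (σ u) then y (σ u) else 0) * y u
        else 0) =
      (if u ∈ Y ∧ σ u ∈ Y ∧ u = σ (σ u) then sCoeff q c (σ u) * (y (σ u) * y u) else 0) := by
    intro c u
    by_cases h1 : u ∈ Y
    · by_cases h2 : σ u ∈ Y ∧ u = σ (σ u)
      · rw [if_pos h1, if_pos h2, if_pos ⟨h1, h2.1, h2.2⟩]; ring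
      · rw [if_pos h1, if_neg h2, if_neg (fun hc => h2 ⟨hc.2.1, hc.2.2⟩)]; ring
    · rw [if_neg h1, if_neg (fun hc => h1 hc.1)]
  have E := entry_eq q A hRE a b b a
  rw [Gval q A Y σ x y hfix hA b a a, Gval q A Y σ x y hfix hA a b b,
    flat b a, flat a b] at E
  simp only [if_neg hab, if_neg (Ne.symm hab), if_pos rfl, if_neg hfa, if_neg hfb,
    Adiag A Y σ x y hfix hA, add_zero, zero_add, mul_zero, zero_mul, ite_true,
    ite_false, eq_self_iff_true] at E
  linear_combination E
end part4

lemma sC_lt {n : ℕ} (q : ℂ) {i k : Fin n} (h : (i:ℕ) < (k:ℕ)) :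
    sCoeff q i k = q - q⁻¹ := if_pos h

lemma sC_self {n : ℕ} (q : ℂ) (i : Fin n) : sCoeff q i i = q := by simp [sCoeff]

lemma sC_gt {n : ℕ} (q : ℂ) {i k : Fin n} (h : (k:ℕ) < (i:ℕ)) : sCoeff q i k = 0 := by
  rw [sCoeff, if_neg (by omega), if_neg (fun he => by rw [he] at h; exact lt_irrefl _ h)]


/-- If a solution `A = Σ_i x_i e^i_i + Σ_{i∈Y} y_i e^{σ(i)}_i` of the
reflection equation has `Y₀ = {i ∈ Y : σ(σ(i)) = i} ≠ ∅`, then `Y₀ = Y`,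
`Y₋ = [1, b₋]`, `Y₊ = [b₊, b₊+b₋-1]`, `σ(i) = b₊ + b₋ - i` on `Y`
(1-based indexing), and `y_i y_{σ(i)}` is independent of `i ∈ Y`. -/
theorem RE_Y0_nonempty (n : ℕ) (hn : 1 ≤ n) (q : ℂ) (hq : q ≠ 0)
    (hq2 : q ^ 2 ≠ 1) (Y : Finset (Fin n)) (σ : Fin n → Fin n)
    (hdec : ∀ i ∈ Y, ∀ j ∈ Y, (i : ℕ) < (j : ℕ) → (σ j : ℕ) < (σ i : ℕ))
    (hfix : ∀ i ∈ Y, σ i ≠ i)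
    (x y : Fin n → ℂ) (hy : ∀ i ∈ Y, y i ≠ 0)
    (A : Matrix (Fin n) (Fin n) ℂ)
    (hA : A = fun j i : Fin n =>
      (if j = i then x i else 0) + (if i ∈ Y ∧ j = σ i then y i else 0))
    (hRE : RE n q A)
    (hY0 : ∃ i ∈ Y, σ i ∈ Y ∧ σ (σ i) = i) :
    (∀ i ∈ Y, σ i ∈ Y ∧ σ (σ i) = i) ∧
    ∃ bm bp : ℕ,
      (∀ i : Fin n, (i ∈ Y ∧ (i : ℕ) < (σ i : ℕ)) ↔ (i : ℕ) + 1 ≤ bm) ∧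
      (∀ i : Fin n, (i ∈ Y ∧ (σ i : ℕ) < (i : ℕ)) ↔
        (bp ≤ (i : ℕ) + 1 ∧ (i : ℕ) + 1 ≤ bp + bm - 1)) ∧
      (∀ i ∈ Y, (σ i : ℕ) + 1 = bp + bm - ((i : ℕ) + 1)) ∧
      (∀ i ∈ Y, ∀ j ∈ Y, y i * y (σ i) = y j * y (σ j)) := by
  have hw : q - q⁻¹ ≠ 0 := by
    intro h
    apply hq2
    have h1 : q = q⁻¹ := sub_eq_zero.mp h
    calc q ^ 2 = q * q := sq q
    _ = q * q⁻¹ := by rw [← h1]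
    _ = 1 := mul_inv_cancel₀ hq
  have vne : ∀ {u v : Fin n}, (u:ℕ) ≠ (v:ℕ) → u ≠ v :=
    fun h he => h (congrArg Fin.val he)
  have veq : ∀ {u v : Fin n}, (u:ℕ) = (v:ℕ) → u = v := fun h => Fin.ext h
  have hinj : ∀ u ∈ Y, ∀ v ∈ Y, σ u = σ v → u = v := by
    intro u hu v hv h
    rcases Nat.lt_trichotomy (u:ℕ) (v:ℕ) with h1 | h1 | h1
    · exact absurd (congrArg Fin.val h) (by have := hdec u hu v hv h1; omega)
    · exact veq h1
    · exact absurd (congrArg Fin.val h) (by have := hdec v hv u hu h1; omega)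
  have hS1 := S1 q A Y σ x y hfix hy hA hRE
  have hS2 := S2 q A Y σ x y hfix hy hA hRE
  have hE5 := E5 q A Y σ x y hfix hy hA hRE
  -- F1a : x (σ i) = 0 for i ∈ Y₋
  have F1a : ∀ i ∈ Y, (i:ℕ) < (σ i:ℕ) → x (σ i) = 0 := by
    intro i hi h
    have E := hS1 i hi
    rw [sC_lt q h, sC_gt q h] at E
    have : (q - q⁻¹) * x (σ i) = 0 := by linear_combination E
    rcases mul_eq_zero.1 this with h' | h'
    · exact absurd h' hw
    · exact h'
  have F1b : ∀ i ∈ Y, (σ i:ℕ) < (i:ℕ) → x i = 0 := by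
    intro i hi h
    have E := hS1 i hi
    rw [sC_lt q h, sC_gt q h] at E
    have : (q - q⁻¹) * x i = 0 := by linear_combination E
    rcases mul_eq_zero.1 this with h' | h'
    · exact absurd h' hw
    · exact h'
  -- F2 : x k = x i + x (σ i) for k below both
  have F2 : ∀ i ∈ Y, ∀ k : Fin n, (k:ℕ) < (i:ℕ) → (k:ℕ) < (σ i:ℕ) →
      x k = x i + x (σ i) := by
    intro i hi k h1 h2
    have E := hS2 i hi k (vne (by omega)) (vne (by omega))
    rw [sC_lt q h2, sC_gt q h1, sC_lt q h1] at E
    have : (q - q⁻¹) * (x k - (x i + x (σ i))) = 0 := by linear_combination E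
    rcases mul_eq_zero.1 this with h' | h'
    · exact absurd h' hw
    · linear_combination h'
  -- F3 : x k = 0 for k above both
  have F3 : ∀ i ∈ Y, ∀ k : Fin n, (i:ℕ) < (k:ℕ) → (σ i:ℕ) < (k:ℕ) → x k = 0 := by
    intro i hi k h1 h2
    have E := hS2 i hi k (vne (by omega)) (vne (by omega))
    rw [sC_gt q h2, sC_lt q h1, sC_gt q h1] at E
    have : (q - q⁻¹) * x k = 0 := by linear_combination - E
    rcases mul_eq_zero.1 this with h' | h'
    · exact absurd h' hw
    · exact h'
  -- key1 and key2
  have key1 : ∀ j' : Fin n, j' ∈ Y → σ j' ∈ Y → σ (σ j') = j' → (j':ℕ) < (σ j':ℕ) →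
      ∀ b : Fin n, (j':ℕ) < (b:ℕ) → (b:ℕ) < (σ j':ℕ) → x b = 0 →
      ¬(b ∈ Y ∧ σ b ∈ Y ∧ b = σ (σ b)) → False := by
    intro j' h1 h2 h3 h4 b hb1 hb2 hxb hnC
    have E := hE5 j' b (vne (by omega))
    rw [if_pos ⟨h1, h2, h3.symm⟩, if_neg hnC, sC_gt q hb1, sC_lt q hb1,
      sC_lt q hb2, hxb] at E
    have : (q - q⁻¹) * (y (σ j') * y j') = 0 := by linear_combination E
    exact (mul_ne_zero hw (mul_ne_zero (hy _ h2) (hy _ h1))) this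
  have key2 : ∀ j' : Fin n, j' ∈ Y → σ j' ∈ Y → σ (σ j') = j' → (j':ℕ) < (σ j':ℕ) →
      ∀ b : Fin n, (b:ℕ) < (j':ℕ) → x b = x j' →
      ¬(b ∈ Y ∧ σ b ∈ Y ∧ b = σ (σ b)) → False := by
    intro j' h1 h2 h3 h4 b hb1 hxb hnC
    have E := hE5 j' b (vne (by omega))
    rw [if_pos ⟨h1, h2, h3.symm⟩, if_neg hnC, sC_lt q hb1, sC_gt q hb1,
      sC_lt q (show (b:ℕ) < (σ j':ℕ) by omega), hxb] at E
    have : (q - q⁻¹) * (y (σ j') * y j') = 0 := by linear_combination E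
    exact (mul_ne_zero hw (mul_ne_zero (hy _ h2) (hy _ h1))) this
  -- base involutive element in Y₋
  obtain ⟨j₀, hj₀Y, hj₀sY, hj₀ss⟩ := hY0
  obtain ⟨j, hjY, hjsY, hjss, hjlt⟩ :
      ∃ j : Fin n, j ∈ Y ∧ σ j ∈ Y ∧ σ (σ j) = j ∧ (j:ℕ) < (σ j:ℕ) := by
    rcases Nat.lt_trichotomy (j₀:ℕ) ((σ j₀:ℕ)) with h | h | h
    · exact ⟨j₀, hj₀Y, hj₀sY, hj₀ss, h⟩
    · exact absurd (veq h.symm) (hfix j₀ hj₀Y)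
    · refine ⟨σ j₀, hj₀sY, ?_, ?_, ?_⟩
      · rw [hj₀ss]; exact hj₀Y
      · rw [hj₀ss]
      · rw [hj₀ss]; exact h
  have hxσj : x (σ j) = 0 := F1a j hjY hjlt
  have hxlow : ∀ k : Fin n, (k:ℕ) < (j:ℕ) → x k = x j := by
    intro k h1
    rw [F2 j hjY k h1 (by omega), hxσj, add_zero]
  -- Claim 1 : involutivity everywhere
  have hC : ∀ i ∈ Y, σ i ∈ Y ∧ σ (σ i) = i := by
    intro i hi
    by_contra hni
    have hnCi : ¬(i ∈ Y ∧ σ i ∈ Y ∧ i = σ (σ i)) := by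
      rintro ⟨_, h2, h3⟩; exact hni ⟨h2, h3.symm⟩
    have hnCσi : ¬(σ i ∈ Y ∧ σ (σ i) ∈ Y ∧ σ i = σ (σ (σ i))) := by
      rintro ⟨h1, h2, h3⟩
      exact hni ⟨h1, hinj (σ (σ i)) h2 i hi h3.symm⟩
    rcases Nat.lt_trichotomy (i:ℕ) ((σ i:ℕ)) with hlt | heq | hgt
    · -- i ∈ Y₋ ; b := σ i
      have hxb : x (σ i) = 0 := F1a i hi hlt
      rcases Nat.lt_trichotomy ((σ i:ℕ)) (j:ℕ) with p1 | p1 | p1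
      · -- σ i < j impossible
        have := hdec i hi j hjY (by omega)
        omega
      · -- σ i = j
        have hij : i = σ j := hinj i hi (σ j) hjsY (by rw [hjss]; exact veq p1)
        apply hnCσi
        rw [veq p1]
        exact ⟨hjY, hjsY, by rw [hjss]⟩
      · rcases Nat.lt_trichotomy ((σ i:ℕ)) ((σ j:ℕ)) with p2 | p2 | p2
        · exact key1 j hjY hjsY hjss hjlt (σ i) p1 p2 hxb hnCσi
        · exact hni ⟨by rw [hinj i hi j hjY (veq p2)]; exact hjsY,
            by rw [hinj i hi j hjY (veq p2), hjss]⟩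
        · -- σ i > σ j hence i < j
          have hij : (i:ℕ) < (j:ℕ) := by
            rcases Nat.lt_trichotomy (i:ℕ) (j:ℕ) with t | t | t
            · exact t
            · exact absurd (congrArg (fun u => ((σ u:ℕ))) (veq t)) (by show ¬ ((σ i:ℕ) = (σ j:ℕ)); omega)
            · have := hdec j hjY i hi t; omega
          exact key2 j hjY hjsY hjss hjlt i hij (hxlow i hij) hnCi
    · exact absurd (veq heq.symm) (hfix i hi)
    · -- i ∈ Y₊ ; x i = 0
      have hxb : x i = 0 := F1b i hi hgt
      rcases Nat.lt_trichotomy (i:ℕ) (j:ℕ) with p1 | p1 | p1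
      · have := hdec i hi j hjY p1; omega
      · exact hnCi ⟨hi, by rw [veq p1]; exact hjsY, by rw [veq p1, hjss]⟩
      · rcases Nat.lt_trichotomy (i:ℕ) ((σ j:ℕ)) with p2 | p2 | p2
        · exact key1 j hjY hjsY hjss hjlt i p1 p2 hxb hnCi
        · -- i = σ j
          apply hnCi
          rw [veq p2]
          exact ⟨hjsY, by rw [hjss]; exact hjY, by rw [hjss]⟩
        · -- i > σ j hence σ i < j
          have hσij : (σ i:ℕ) < (j:ℕ) := by
            have := hdec (σ j) hjsY i hi p2
            rw [hjss] at this
            exact this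
          exact key2 j hjY hjsY hjss hjlt (σ i) hσij (hxlow (σ i) hσij) hnCσi
  -- maximal element of Y₋
  set T := Y.filter (fun i : Fin n => (i:ℕ) < ((σ i:ℕ))) with hT
  have hTne : T.Nonempty := ⟨j, by rw [hT]; exact Finset.mem_filter.2 ⟨hjY, hjlt⟩⟩
  set mx := T.max' hTne with hmxdef
  have hmxT : mx ∈ T := T.max'_mem hTne
  have hmxY : mx ∈ Y := (Finset.mem_filter.1 hmxT).1
  have hmxlt : (mx:ℕ) < ((σ mx:ℕ)) := (Finset.mem_filter.1 hmxT).2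
  have hmax : ∀ i ∈ Y, (i:ℕ) < ((σ i:ℕ)) → (i:ℕ) ≤ (mx:ℕ) := by
    intro i hi h
    exact T.le_max' i (Finset.mem_filter.2 ⟨hi, h⟩)
  -- Claim 3 : initial segment
  have hseg : ∀ k : Fin n, (k:ℕ) ≤ (mx:ℕ) → k ∈ Y ∧ (k:ℕ) < ((σ k:ℕ)) := by
    intro k hk
    have hkY : k ∈ Y := by
      by_contra hkY
      have hkne : (k:ℕ) ≠ (mx:ℕ) := fun h => hkY (veq h ▸ hmxY)
      have hklt : (k:ℕ) < (mx:ℕ) := by omega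
      have hxk : x k = x mx := by
        rw [F2 mx hmxY k hklt (by omega), F1a mx hmxY hmxlt, add_zero]
      exact (key2 mx hmxY (hC mx hmxY).1 (hC mx hmxY).2 hmxlt k hklt hxk
        (fun hc => hkY hc.1)).elim
    refine ⟨hkY, ?_⟩
    rcases Nat.lt_trichotomy (k:ℕ) ((σ k:ℕ)) with h | h | h
    · exact h
    · exact absurd (veq h.symm) (hfix k hkY)
    · rcases Nat.lt_trichotomy (k:ℕ) (mx:ℕ) with t | t | t
      · have := hdec k hkY mx hmxY t; omega
      · rw [veq t] at h; omega
      · omega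
  -- Claim 4 : consecutive values of σ
  have hcons : ∀ k l : Fin n, (l:ℕ) ≤ (mx:ℕ) → (l:ℕ) = (k:ℕ) + 1 →
      ((σ k:ℕ)) = ((σ l:ℕ)) + 1 := by
    intro k l hl hlk
    have hk : (k:ℕ) ≤ (mx:ℕ) := by omega
    obtain ⟨hkY, hklt⟩ := hseg k hk
    obtain ⟨hlY, hllt⟩ := hseg l hl
    have hσlk : ((σ l:ℕ)) < ((σ k:ℕ)) := hdec k hkY l hlY (by omega)
    by_contra hne
    have hgap : ((σ l:ℕ)) + 1 < ((σ k:ℕ)) := by omega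
    have hmlt : ((σ l:ℕ)) + 1 < n := lt_trans hgap (σ k).isLt
    set m : Fin n := ⟨(σ l:ℕ) + 1, hmlt⟩ with hm
    have hmval : (m:ℕ) = ((σ l:ℕ)) + 1 := rfl
    have hnCm : ¬(m ∈ Y ∧ σ m ∈ Y ∧ m = σ (σ m)) := by
      rintro ⟨hmY, hmsY, hmss⟩
      rcases Nat.lt_trichotomy (m:ℕ) ((σ m:ℕ)) with t | t | t
      · have := hdec l hlY m hmY (by omega)
        omega
      · exact absurd (veq t.symm) (hfix m hmY)
      · have h1 : (k:ℕ) < ((σ m:ℕ)) := by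
          have := hdec m hmY (σ k) (hC k hkY).1 (by omega)
          rw [(hC k hkY).2] at this
          exact this
        have h2 : ((σ m:ℕ)) < (l:ℕ) := by
          have := hdec (σ l) (hC l hlY).1 m hmY (by omega)
          rw [(hC l hlY).2] at this
          exact this
        omega
    have hxm : x m = 0 := F3 l hlY m (by omega) (by omega)
    exact key1 k hkY (hC k hkY).1 (hC k hkY).2 hklt m (by omega) (by omega) hxm hnCm
  -- affine formula
  have haff : ∀ d : ℕ, ∀ k : Fin n, (k:ℕ) ≤ (mx:ℕ) → (mx:ℕ) - (k:ℕ) = d →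
      ((σ k:ℕ)) + (k:ℕ) = ((σ mx:ℕ)) + (mx:ℕ) := by
    intro d
    induction d with
    | zero =>
      intro k hk h0
      rw [veq (show (k:ℕ) = (mx:ℕ) by omega)]
    | succ d ih =>
      intro k hk hd
      have hlt : (k:ℕ) + 1 < n := by have := mx.isLt; omega
      set l : Fin n := ⟨(k:ℕ) + 1, hlt⟩ with hldef
      have hlval : (l:ℕ) = (k:ℕ) + 1 := rfl
      have hc := hcons k l (by omega) hlval
      have := ih l (by omega) (by omega)
      omega
  have hsum : ∀ i ∈ Y, (i:ℕ) + ((σ i:ℕ)) = (mx:ℕ) + ((σ mx:ℕ)) := by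
    intro i hi
    rcases Nat.lt_trichotomy (i:ℕ) ((σ i:ℕ)) with t | t | t
    · have := haff ((mx:ℕ) - (i:ℕ)) i (hmax i hi t) rfl
      omega
    · exact absurd (veq t.symm) (hfix i hi)
    · have hsY := (hC i hi).1
      have hslt : ((σ i:ℕ)) < ((σ (σ i):ℕ)) := by rw [(hC i hi).2]; exact t
      have := haff ((mx:ℕ) - ((σ i:ℕ))) (σ i) (hmax (σ i) hsY hslt) rfl
      rw [(hC i hi).2] at this
      omega
  -- Claim 2 : products equal
  have hPeq : ∀ i ∈ Y, (i:ℕ) < ((σ i:ℕ)) → y (σ i) * y i = y (σ j) * y j := by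
    intro i hi hilt
    rcases Nat.lt_trichotomy (i:ℕ) (j:ℕ) with t | t | t
    · have E := hE5 j i (vne (by omega))
      rw [if_pos ⟨hjY, hjsY, hjss.symm⟩,
        if_pos ⟨hi, (hC i hi).1, (hC i hi).2.symm⟩, sC_lt q t, sC_gt q t,
        sC_lt q (show (i:ℕ) < ((σ j:ℕ)) by omega),
        sC_lt q (show (j:ℕ) < ((σ i:ℕ)) by
          have := hdec i hi j hjY t; omega),
        hxlow i t] at E
      have h0 : (q - q⁻¹) * (y (σ i) * y i - y (σ j) * y j) = 0 := by
        linear_combination - E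
      rcases mul_eq_zero.1 h0 with h' | h'
      · exact absurd h' hw
      · linear_combination h'
    · rw [veq t]
    · have E := hE5 i j (vne (by omega))
      rw [if_pos ⟨hi, (hC i hi).1, (hC i hi).2.symm⟩,
        if_pos ⟨hjY, hjsY, hjss.symm⟩, sC_lt q t, sC_gt q t,
        sC_lt q (show (j:ℕ) < ((σ i:ℕ)) by omega),
        sC_lt q (show (i:ℕ) < ((σ j:ℕ)) by
          have := hdec j hjY i hi t; omega)] at E
      have hxji : x j = x i := by
        rw [F2 i hi j t (by omega), F1a i hi hilt, add_zero]
      rw [hxji] at E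
      have h0 : (q - q⁻¹) * (y (σ i) * y i - y (σ j) * y j) = 0 := by
        linear_combination E
      rcases mul_eq_zero.1 h0 with h' | h'
      · exact absurd h' hw
      · linear_combination h'
  have aux : ∀ i ∈ Y, y i * y (σ i) = y (σ j) * y j := by
    intro i hi
    rcases Nat.lt_trichotomy (i:ℕ) ((σ i:ℕ)) with t | t | t
    · rw [mul_comm]; exact hPeq i hi t
    · exact absurd (veq t.symm) (hfix i hi)
    · have h2 := hPeq (σ i) ((hC i hi).1) (by rw [(hC i hi).2]; exact t)
      rw [(hC i hi).2] at h2
      exact h2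
  refine ⟨hC, (mx:ℕ) + 1, ((σ mx:ℕ)) + 1, ?_, ?_, ?_, ?_⟩
  · intro i
    constructor
    · rintro ⟨hi, hlt⟩
      have := hmax i hi hlt
      omega
    · intro h
      exact hseg i (by omega)
  · intro i
    constructor
    · rintro ⟨hi, hgt⟩
      have h1 := hsum i hi
      have h2 : ((σ i:ℕ)) ≤ (mx:ℕ) := by
        apply hmax (σ i) (hC i hi).1
        rw [(hC i hi).2]
        exact hgt
      omega
    · rintro ⟨h1, h2⟩
      have hkvle : ((σ mx:ℕ)) + (mx:ℕ) - (i:ℕ) ≤ (mx:ℕ) := by omega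
      set kv : ℕ := ((σ mx:ℕ)) + (mx:ℕ) - (i:ℕ) with hkv
      set kF : Fin n := ⟨kv, by have := mx.isLt; omega⟩ with hkF
      have hkFval : (kF:ℕ) = kv := rfl
      obtain ⟨hkY, hklt⟩ := hseg kF (by omega)
      have hs := hsum kF hkY
      have hσkF : σ kF = i := veq (by omega)
      constructor
      · rw [← hσkF]; exact (hC kF hkY).1
      · rw [← hσkF, (hC kF hkY).2]
        rw [hσkF]
        omega
  · intro i hi
    have := hsum i hi
    omega
  · intro i hi j' hj'
    rw [aux i hi, aux j' hj']
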